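/- arXiv:2605.04929 — 5 statements merged into one kernel-verified Lean document; each statement's English description precedes it below -/
import Mathlib

section
/- Every nonempty generalized polyhedron Q = {x ∈ ℝⁿ : A x ≥ a, B x > b} with rational data contains a rational point. -/
open Matrix

private lemma cast_dot {n : ℕ} (r q : Fin n → ℚ) :
    (fun j => (r j : ℝ)) ⬝ᵥ (fun j => (q j : ℝ)) = ((r ⬝ᵥ q : ℚ) : ℝ) := by
  simp [dotProduct]

private lemma dot_lip {n : ℕ} (r : Fin n → ℚ) (v w : Fin n → ℝ) :
    |(fun j => (r j : ℝ)) ⬝ᵥ v - (fun j => (r j : ℝ)) ⬝ᵥ w| ≤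
      (∑ j, |(r j : ℝ)|) * dist v w := by
  rw [← dotProduct_sub]
  simp only [dotProduct]
  calc |∑ j, (r j : ℝ) * (v - w) j| ≤ ∑ j, |(r j : ℝ) * (v - w) j| :=
        Finset.abs_sum_le_sum_abs _ _
    _ ≤ ∑ j, |(r j : ℝ)| * dist v w := by
        refine Finset.sum_le_sum fun j _ => ?_
        rw [abs_mul]
        refine mul_le_mul_of_nonneg_left ?_ (abs_nonneg _)
        rw [Pi.sub_apply, ← Real.dist_eq]
        exact dist_le_pi_dist v w j
    _ = (∑ j, |(r j : ℝ)|) * dist v w := by rw [Finset.sum_mul]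

private lemma key {n : ℕ} : ∀ (k : ℕ) (M : Matrix (Fin k) (Fin n) ℚ) (c : Fin k → ℚ)
    (x₀ : Fin n → ℝ), (M.map ((↑·) : ℚ → ℝ)) *ᵥ x₀ = (fun i => (c i : ℝ)) →
    ∀ ε : ℝ, 0 < ε → ∃ q : Fin n → ℚ, M *ᵥ q = c ∧ dist (fun j => (q j : ℝ)) x₀ < ε := by
  intro k
  induction k with
  | zero =>
      intro M c x₀ _ ε hε
      have h : ∀ j, ∃ qj : ℚ, |x₀ j - (qj : ℝ)| < ε / 2 :=
        fun j => exists_rat_near (x₀ j) (by positivity)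
      choose q hq using h
      refine ⟨q, funext fun i => i.elim0, ?_⟩
      rw [dist_pi_lt_iff hε]
      intro j
      rw [Real.dist_eq, abs_sub_comm]
      exact (hq j).trans (by linarith)
  | succ k IH =>
      intro M c x₀ hx ε hε
      set M₁ : Matrix (Fin k) (Fin n) ℚ := Matrix.of (fun j => M j.succ) with hM₁
      have hx₁ : (M₁.map ((↑·) : ℚ → ℝ)) *ᵥ x₀ = (fun j : Fin k => (c j.succ : ℝ)) := by
        funext j
        exact congrFun hx j.succ
      set r : Fin n → ℚ := M 0 with hr
      have hr0 : (fun j => (r j : ℝ)) ⬝ᵥ x₀ = (c 0 : ℝ) := congrFun hx 0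
      set C : ℝ := ∑ j, |(r j : ℝ)| with hC
      have hC0 : 0 ≤ C := Finset.sum_nonneg fun j _ => abs_nonneg _
      by_cases hcon : ∃ d : Fin n → ℚ, M₁ *ᵥ d = 0 ∧ r ⬝ᵥ d ≠ 0
      · obtain ⟨d, hd1, hd0⟩ := hcon
        set κ : ℝ := |((r ⬝ᵥ d : ℚ) : ℝ)| with hκ
        have hκ0 : 0 < κ := abs_pos.mpr (by exact_mod_cast hd0)
        set D : ℝ := ‖(fun j => (d j : ℝ))‖ with hD
        have hD0 : 0 ≤ D := norm_nonneg _
        set E : ℝ := 1 + C * D / κ with hE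
        have hE0 : 0 < E := by positivity
        set δ : ℝ := ε / (2 * E) with hδ
        have hδ0 : 0 < δ := by positivity
        obtain ⟨q, hq, hqd⟩ := IH M₁ (fun j => c j.succ) x₀ hx₁ δ hδ0
        set t : ℚ := (c 0 - r ⬝ᵥ q) / (r ⬝ᵥ d) with ht
        refine ⟨q + t • d, ?_, ?_⟩
        · funext i
          refine Fin.cases ?_ ?_ i
          · show r ⬝ᵥ (q + t • d) = c 0
            rw [dotProduct_add, dotProduct_smul, smul_eq_mul, ht,
              div_mul_cancel₀ _ hd0]
            ring
          · intro j
            show (M₁ *ᵥ (q + t • d)) j = c j.succ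
            rw [Matrix.mulVec_add, Matrix.mulVec_smul, hq, hd1]
            simp
        · have hcastadd : (fun j => (((q + t • d) j : ℚ) : ℝ)) =
              (fun j => (q j : ℝ)) + (t : ℝ) • (fun j => (d j : ℝ)) := by
            funext j
            simp only [Pi.add_apply, Pi.smul_apply, smul_eq_mul]
            push_cast
            ring
          have habs : |(c 0 : ℝ) - ((r ⬝ᵥ q : ℚ) : ℝ)| ≤ C * δ := by
            rw [← hr0, ← cast_dot r q]
            refine (dot_lip r x₀ (fun j => (q j : ℝ))).trans ?_
            rw [dist_comm]
            exact mul_le_mul_of_nonneg_left hqd.le hC0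
          have htabs : |(t : ℝ)| ≤ C * δ / κ := by
            rw [ht]
            push_cast
            rw [abs_div]
            rw [hκ]
            gcongr
          have h1 : dist (fun j => (((q + t • d) j : ℚ) : ℝ)) x₀ ≤
              |(t : ℝ)| * D + dist (fun j => (q j : ℝ)) x₀ := by
            rw [hcastadd]
            refine (dist_triangle _ (fun j => (q j : ℝ)) x₀).trans ?_
            have : dist ((fun j => (q j : ℝ)) + (t : ℝ) • (fun j => (d j : ℝ)))
                (fun j => (q j : ℝ)) = |(t : ℝ)| * D := by
              rw [dist_eq_norm, add_sub_cancel_left, norm_smul, Real.norm_eq_abs, hD]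
            rw [this]
          have h2 : |(t : ℝ)| * D ≤ (C * δ / κ) * D := mul_le_mul_of_nonneg_right htabs hD0
          have h3 : (C * δ / κ) * D + δ = δ * E := by rw [hE]; ring
          have h4 : δ * E = ε / 2 := by
            rw [hδ]
            field_simp
          linarith
      · push_neg at hcon
        obtain ⟨q, hq, hqd⟩ := IH M₁ (fun j => c j.succ) x₀ hx₁ ε hε
        have hrq : ∀ q' : Fin n → ℚ, M₁ *ᵥ q' = (fun j : Fin k => c j.succ) →
            r ⬝ᵥ q' = r ⬝ᵥ q := by
          intro q' hq'
          have h0 : M₁ *ᵥ (q' - q) = 0 := by rw [Matrix.mulVec_sub, hq', hq, sub_self]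
          have h1 := hcon _ h0
          rw [dotProduct_sub, sub_eq_zero] at h1
          exact h1
        have hXzero : ((r ⬝ᵥ q : ℚ) : ℝ) - (c 0 : ℝ) = 0 := by
          have hb : ∀ δ : ℝ, 0 < δ → |((r ⬝ᵥ q : ℚ) : ℝ) - (c 0 : ℝ)| ≤ C * δ := by
            intro δ hδp
            obtain ⟨q', hq', hq'd⟩ := IH M₁ (fun j => c j.succ) x₀ hx₁ δ hδp
            rw [← hrq q' hq', ← hr0, ← cast_dot]
            exact (dot_lip r _ x₀).trans (mul_le_mul_of_nonneg_left hq'd.le hC0)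
          set X : ℝ := ((r ⬝ᵥ q : ℚ) : ℝ) - (c 0 : ℝ) with hXdef
          rw [← abs_eq_zero]
          by_contra hne
          have hpos : 0 < |X| := (abs_nonneg _).lt_of_ne (Ne.symm hne)
          have hle := hb (|X| / (2 * (C + 1))) (by positivity)
          have h2 : (0 : ℝ) < 2 * (C + 1) := by positivity
          have h3 : C * (|X| / (2 * (C + 1))) = |X| * (C / (2 * (C + 1))) := by ring
          have h4 : C / (2 * (C + 1)) < 1 := by rw [div_lt_one h2]; linarith
          have h5 : |X| * (C / (2 * (C + 1))) < |X| := by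
            calc |X| * (C / (2 * (C + 1))) < |X| * 1 := by
                  exact mul_lt_mul_of_pos_left h4 hpos
              _ = |X| := mul_one _
          rw [h3] at hle
          linarith
        have hrqc : r ⬝ᵥ q = c 0 := by
          rw [sub_eq_zero] at hXzero
          exact_mod_cast hXzero
        refine ⟨q, ?_, hqd⟩
        funext i
        refine Fin.cases ?_ ?_ i
        · exact hrqc
        · intro j
          exact congrFun hq j

/-- a nonempty rational generalized polyhedron contains a rational point. -/
theorem stmt_1 {n m m' : ℕ}
    (A : Matrix (Fin m) (Fin n) ℚ) (B : Matrix (Fin m') (Fin n) ℚ)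
    (a : Fin m → ℚ) (b : Fin m' → ℚ)
    (hne : {x : Fin n → ℝ |
      (fun i => (a i : ℝ)) ≤ (A.map ((↑·) : ℚ → ℝ)).mulVec x ∧
      (∀ i, (b i : ℝ) < (B.map ((↑·) : ℚ → ℝ)).mulVec x i)}.Nonempty) :
    ∃ q : Fin n → ℚ,
      (fun j => (q j : ℝ)) ∈ {x : Fin n → ℝ |
        (fun i => (a i : ℝ)) ≤ (A.map ((↑·) : ℚ → ℝ)).mulVec x ∧
        (∀ i, (b i : ℝ) < (B.map ((↑·) : ℚ → ℝ)).mulVec x i)} := by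
  classical
  obtain ⟨x₀, hA, hB⟩ := hne
  set A' := A.map ((↑·) : ℚ → ℝ) with hA'
  set B' := B.map ((↑·) : ℚ → ℝ) with hB'
  set s : Fin m → Prop := fun i => (A' *ᵥ x₀) i = (a i : ℝ) with hs
  set M : Matrix (Fin m) (Fin n) ℚ := Matrix.of (fun i j => if s i then A i j else 0) with hM
  set c : Fin m → ℚ := fun i => if s i then a i else 0 with hc
  have hx : (M.map ((↑·) : ℚ → ℝ)) *ᵥ x₀ = fun i => (c i : ℝ) := by
    funext i
    simp only [hM, hc, Matrix.mulVec, dotProduct, Matrix.map_apply, Matrix.of_apply]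
    by_cases h : s i
    · simp only [eq_true h, if_true]
      simpa [hs, Matrix.mulVec, dotProduct, Matrix.map_apply, hA'] using h
    · simp only [eq_false h, if_false]
      simp
  have hcont : ∀ (k : ℕ) (N : Matrix (Fin k) (Fin n) ℝ) (i : Fin k),
      Continuous fun x : Fin n → ℝ => (N *ᵥ x) i := by
    intro k N i
    simp only [Matrix.mulVec, dotProduct]
    exact continuous_finset_sum _ fun j _ => continuous_const.mul (continuous_apply j)
  set U : Set (Fin n → ℝ) := {x | (∀ i, ¬ s i → (a i : ℝ) < (A' *ᵥ x) i) ∧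
      ∀ i', (b i' : ℝ) < (B' *ᵥ x) i'} with hU
  have hUopen : IsOpen U := by
    have h1 : U = (⋂ i, {x | ¬ s i → (a i : ℝ) < (A' *ᵥ x) i}) ∩
        ⋂ i', {x | (b i' : ℝ) < (B' *ᵥ x) i'} := by
      ext x
      simp [hU, Set.mem_iInter]
    rw [h1]
    refine IsOpen.inter (isOpen_iInter_of_finite fun i => ?_)
      (isOpen_iInter_of_finite fun i' => isOpen_lt continuous_const (hcont _ _ _))
    by_cases h : s i
    · simp only [eq_true h, not_true, false_implies]
      exact isOpen_univ
    · simp only [eq_false h, not_false_iff, true_implies]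
      exact isOpen_lt continuous_const (hcont _ _ _)
  have hxU : x₀ ∈ U := by
    refine ⟨fun i hi => lt_of_le_of_ne (hA i) (fun he => hi he.symm), hB⟩
  obtain ⟨ε, hε, hball⟩ := Metric.isOpen_iff.mp hUopen x₀ hxU
  obtain ⟨q, hq, hqd⟩ := key m M c x₀ hx ε hε
  have hqU : (fun j => (q j : ℝ)) ∈ U := hball (by rwa [Metric.mem_ball])
  refine ⟨q, fun i => ?_, hqU.2⟩
  by_cases h : s i
  · have h1 := congrFun hq i
    have h2 : A i ⬝ᵥ q = a i := by
      simp only [hM, hc, eq_true h, if_true, Matrix.mulVec, Matrix.of_apply] at h1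
      simpa [dotProduct] using h1
    have h3 : (A' *ᵥ (fun j => (q j : ℝ))) i = ((A i ⬝ᵥ q : ℚ) : ℝ) := by
      rw [← cast_dot]
      rfl
    rw [h3, h2]
  · exact (hqU.1 i h).le
end

section
/- The complement in ℝⁿ of a generalized polyhedron P = {x : A x ≥ b, C x > d} can be written as a finite disjoint union of generalized polyhedra, each defined by inequalities whose coefficient rows are taken from the rows of A, C (possibly negated) and whose right-hand sides come from b, d. -/
open Finset
open scoped Classical

private def satC {n m m' : ℕ} (A : Matrix (Fin m) (Fin n) ℝ) (C : Matrix (Fin m') (Fin n) ℝ)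
    (b : Fin m → ℝ) (d : Fin m' → ℝ) (x : Fin n → ℝ) : Fin m ⊕ Fin m' → Prop :=
  Sum.elim (fun i => b i ≤ ∑ j, A i j * x j) (fun j => d j < ∑ j', C j j' * x j')

private noncomputable def Wp {n m m' : ℕ} (A : Matrix (Fin m) (Fin n) ℝ)
    (C : Matrix (Fin m') (Fin n) ℝ) (b : Fin m → ℝ) (d : Fin m' → ℝ)
    (l : Fin (m + m')) : Finset ((Fin n → ℝ) × ℝ) :=
  Sum.elim
    (fun i : Fin m => (Finset.univ.filter (fun i' : Fin m => i' < i)).image fun i' => (A i', b i'))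
    (fun j : Fin m' => (Finset.univ.image fun i : Fin m => (A i, b i)) ∪ {(-(C j), -(d j))})
    (finSumFinEquiv.symm l)

private noncomputable def Sp {n m m' : ℕ} (A : Matrix (Fin m) (Fin n) ℝ)
    (C : Matrix (Fin m') (Fin n) ℝ) (b : Fin m → ℝ) (d : Fin m' → ℝ)
    (l : Fin (m + m')) : Finset ((Fin n → ℝ) × ℝ) :=
  Sum.elim
    (fun i : Fin m => {(-(A i), -(b i))})
    (fun j : Fin m' => (Finset.univ.filter (fun j' : Fin m' => j' < j)).image fun j' => (C j', d j'))
    (finSumFinEquiv.symm l)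

private lemma neg_sum_eq {n : ℕ} (v : Fin n → ℝ) (x : Fin n → ℝ) :
    ∑ j, (-v) j * x j = -∑ j, v j * x j := by
  simp [neg_mul, Finset.sum_neg_distrib]

private lemma neg_sum_lemma {n : ℕ} (v : Fin n → ℝ) (x : Fin n → ℝ) (c : ℝ) :
    (-c ≤ ∑ j, (-v) j * x j ↔ ∑ j, v j * x j ≤ c) := by
  rw [neg_sum_eq]; constructor <;> intro h <;> linarith

private lemma neg_sum_lemma' {n : ℕ} (v : Fin n → ℝ) (x : Fin n → ℝ) (c : ℝ) :
    (-c < ∑ j, (-v) j * x j ↔ ∑ j, v j * x j < c) := by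
  rw [neg_sum_eq]; constructor <;> intro h <;> linarith

private lemma piece_iff {n m m' : ℕ} (A : Matrix (Fin m) (Fin n) ℝ)
    (C : Matrix (Fin m') (Fin n) ℝ) (b : Fin m → ℝ) (d : Fin m' → ℝ)
    (l : Fin (m + m')) (x : Fin n → ℝ) :
    ((∀ p ∈ Wp A C b d l, p.2 ≤ ∑ j, p.1 j * x j) ∧
     (∀ p ∈ Sp A C b d l, p.2 < ∑ j, p.1 j * x j)) ↔
    ((∀ s : Fin m ⊕ Fin m', (finSumFinEquiv s : Fin (m + m')) < l → satC A C b d x s) ∧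
     ¬ satC A C b d x (finSumFinEquiv.symm l)) := by
  rcases h : finSumFinEquiv.symm l with i | j
  · have hl : l = finSumFinEquiv (Sum.inl i) := by
      rw [← h, Equiv.apply_symm_apply]
    constructor
    · rintro ⟨hW, hS⟩
      refine ⟨?_, ?_⟩
      · rintro (i' | j') hlt
        · simp only [satC, Sum.elim_inl]
          refine hW (A i', b i') ?_
          simp only [Wp, h, Sum.elim_inl, Finset.mem_image, Finset.mem_filter]
          refine ⟨i', ⟨Finset.mem_univ _, ?_⟩, rfl⟩
          rw [hl, finSumFinEquiv_apply_left, finSumFinEquiv_apply_left] at hlt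
          simp only [Fin.lt_def, Fin.coe_castAdd] at hlt
          exact hlt
        · exfalso
          rw [hl, finSumFinEquiv_apply_right, finSumFinEquiv_apply_left] at hlt
          simp only [Fin.lt_def, Fin.coe_castAdd, Fin.coe_natAdd] at hlt
          omega
      · simp only [satC, Sum.elim_inl, not_le]
        have := hS (-(A i), -(b i)) (by simp [Sp, h])
        simpa [neg_sum_lemma'] using this
    · rintro ⟨hall, hviol⟩
      simp only [satC, Sum.elim_inl, not_le] at hviol
      constructor
      · intro p hp
        simp only [Wp, h, Sum.elim_inl, Finset.mem_image, Finset.mem_filter] at hp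
        obtain ⟨i', ⟨-, hi'⟩, rfl⟩ := hp
        have := hall (Sum.inl i') ?_
        · simpa [satC] using this
        · rw [hl, finSumFinEquiv_apply_left, finSumFinEquiv_apply_left]
          simp only [Fin.lt_def, Fin.coe_castAdd]
          exact hi'
      · intro p hp
        simp only [Sp, h, Sum.elim_inl, Finset.mem_singleton] at hp
        subst hp
        simpa [neg_sum_lemma'] using hviol
  · have hl : l = finSumFinEquiv (Sum.inr j) := by
      rw [← h, Equiv.apply_symm_apply]
    constructor
    · rintro ⟨hW, hS⟩
      refine ⟨?_, ?_⟩
      · rintro (i' | j') hlt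
        · simp only [satC, Sum.elim_inl]
          refine hW (A i', b i') ?_
          simp only [Wp, h, Sum.elim_inr, Finset.mem_union, Finset.mem_image,
            Finset.mem_singleton]
          exact Or.inl ⟨i', Finset.mem_univ _, rfl⟩
        · simp only [satC, Sum.elim_inr]
          refine hS (C j', d j') ?_
          simp only [Sp, h, Sum.elim_inr, Finset.mem_image, Finset.mem_filter]
          refine ⟨j', ⟨Finset.mem_univ _, ?_⟩, rfl⟩
          rw [hl, finSumFinEquiv_apply_right, finSumFinEquiv_apply_right] at hlt
          simp only [Fin.lt_def, Fin.coe_natAdd] at hlt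
          simp only [Fin.lt_def]
          omega
      · simp only [satC, Sum.elim_inr, not_lt]
        have := hW (-(C j), -(d j)) (by simp [Wp, h])
        simpa [neg_sum_lemma] using this
    · rintro ⟨hall, hviol⟩
      simp only [satC, Sum.elim_inr, not_lt] at hviol
      constructor
      · intro p hp
        simp only [Wp, h, Sum.elim_inr, Finset.mem_union, Finset.mem_image,
          Finset.mem_singleton] at hp
        rcases hp with ⟨i', -, rfl⟩ | rfl
        · have := hall (Sum.inl i') ?_
          · simpa [satC] using this
          · rw [hl, finSumFinEquiv_apply_left, finSumFinEquiv_apply_right]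
            simp only [Fin.lt_def, Fin.coe_castAdd, Fin.coe_natAdd]
            omega
        · simpa [neg_sum_lemma] using hviol
      · intro p hp
        simp only [Sp, h, Sum.elim_inr, Finset.mem_image, Finset.mem_filter] at hp
        obtain ⟨j', ⟨-, hj'⟩, rfl⟩ := hp
        have := hall (Sum.inr j') ?_
        · simpa [satC] using this
        · rw [hl, finSumFinEquiv_apply_right, finSumFinEquiv_apply_right]
          simp only [Fin.lt_def, Fin.coe_natAdd]
          simp only [Fin.lt_def] at hj'
          omega

/-- the complement of a generalized polyhedron {x : A x ≥ b, C x > d}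
is a finite disjoint union of generalized polyhedra whose defining inequalities
have coefficient rows taken from the rows of A, C (possibly negated) and
right-hand sides coming from b, d (correspondingly negated). -/
theorem stmt_5 {n m m' : ℕ}
    (A : Matrix (Fin m) (Fin n) ℝ) (C : Matrix (Fin m') (Fin n) ℝ)
    (b : Fin m → ℝ) (d : Fin m' → ℝ) :
    ∃ (k : ℕ)
      (W S : Fin k → Finset ((Fin n → ℝ) × ℝ)),
      -- each inequality comes from a (possibly negated) row of A or C with the
      -- corresponding right-hand side from b or d
      (∀ l, ∀ p ∈ W l ∪ S l,
        (∃ i, p = (A i, b i)) ∨ (∃ i, p = (-(A i), -(b i))) ∨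
        (∃ i, p = (C i, d i)) ∨ (∃ i, p = (-(C i), -(d i)))) ∧
      -- the pieces are pairwise disjoint
      (Pairwise (Function.onFun Disjoint (fun l =>
        {x : Fin n → ℝ | (∀ p ∈ W l, p.2 ≤ ∑ j, p.1 j * x j) ∧
                         (∀ p ∈ S l, p.2 < ∑ j, p.1 j * x j)}))) ∧
      -- and their union is the complement of the generalized polyhedron
      (⋃ l, {x : Fin n → ℝ | (∀ p ∈ W l, p.2 ≤ ∑ j, p.1 j * x j) ∧
                             (∀ p ∈ S l, p.2 < ∑ j, p.1 j * x j)})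
        = {x : Fin n → ℝ | b ≤ A.mulVec x ∧ ∀ i, d i < C.mulVec x i}ᶜ := by
  classical
  refine ⟨m + m', Wp A C b d, Sp A C b d, ?_, ?_, ?_⟩
  · -- provenance of inequalities
    intro l p hp
    rw [Finset.mem_union] at hp
    rcases h : finSumFinEquiv.symm l with i | j <;>
      rcases hp with hp | hp <;>
      simp only [Wp, Sp, h, Sum.elim_inl, Sum.elim_inr, Finset.mem_union, Finset.mem_image,
        Finset.mem_filter, Finset.mem_singleton] at hp
    · obtain ⟨i', -, rfl⟩ := hp
      exact Or.inl ⟨i', rfl⟩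
    · exact Or.inr (Or.inl ⟨i, hp⟩)
    · rcases hp with ⟨i', -, rfl⟩ | rfl
      · exact Or.inl ⟨i', rfl⟩
      · exact Or.inr (Or.inr (Or.inr ⟨j, rfl⟩))
    · obtain ⟨j', -, rfl⟩ := hp
      exact Or.inr (Or.inr (Or.inl ⟨j', rfl⟩))
  · -- pairwise disjoint
    intro l1 l2 hne
    rw [Function.onFun]
    rw [Set.disjoint_left]
    intro x hx1 hx2
    rw [Set.mem_setOf_eq, piece_iff] at hx1 hx2
    rcases lt_or_gt_of_ne hne with hlt | hlt
    · exact hx1.2 (by simpa using hx2.1 (finSumFinEquiv.symm l1) (by simpa using hlt))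
    · exact hx2.2 (by simpa using hx1.1 (finSumFinEquiv.symm l2) (by simpa using hlt))
  · -- union is the complement
    ext x
    simp only [Set.mem_iUnion, Set.mem_setOf_eq, Set.mem_compl_iff, not_and_or]
    constructor
    · rintro ⟨l, hl⟩
      rw [piece_iff] at hl
      rcases h : finSumFinEquiv.symm l with i | j
      · left
        rw [h] at hl
        simp only [satC, Sum.elim_inl, not_le] at hl
        intro hle
        have := hle i
        rw [Matrix.mulVec, dotProduct] at this
        exact absurd this (not_le.mpr hl.2)
      · right
        rw [h] at hl
        simp only [satC, Sum.elim_inr, not_lt] at hl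
        intro hall
        have := hall j
        rw [Matrix.mulVec, dotProduct] at this
        exact absurd this (not_lt.mpr hl.2)
    · intro hnot
      -- some constraint is violated
      have hex : ∃ s : Fin m ⊕ Fin m', ¬ satC A C b d x s := by
        rcases hnot with hnot | hnot
        · rw [Pi.le_def] at hnot
          push_neg at hnot
          obtain ⟨i, hi⟩ := hnot
          refine ⟨Sum.inl i, ?_⟩
          simp only [satC, Sum.elim_inl, not_le]
          rw [Matrix.mulVec, dotProduct] at hi
          exact hi
        · push_neg at hnot
          obtain ⟨j, hj⟩ := hnot
          refine ⟨Sum.inr j, ?_⟩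
          simp only [satC, Sum.elim_inr, not_lt]
          rw [Matrix.mulVec, dotProduct] at hj
          exact hj
      obtain ⟨s, hs⟩ := hex
      have hne : (Finset.univ.filter
          (fun l : Fin (m + m') => ¬ satC A C b d x (finSumFinEquiv.symm l))).Nonempty := by
        refine ⟨finSumFinEquiv s, ?_⟩
        simp only [Finset.mem_filter, Finset.mem_univ, true_and, Equiv.symm_apply_apply]
        exact hs
      refine ⟨(Finset.univ.filter
          (fun l : Fin (m + m') => ¬ satC A C b d x (finSumFinEquiv.symm l))).min' hne, ?_⟩
      rw [piece_iff]
      have hmem := Finset.min'_mem _ hne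
      rw [Finset.mem_filter] at hmem
      refine ⟨?_, hmem.2⟩
      intro s' hlt
      by_contra hviol
      have hmem2 : finSumFinEquiv s' ∈ Finset.univ.filter
          (fun l : Fin (m + m') => ¬ satC A C b d x (finSumFinEquiv.symm l)) :=
        Finset.mem_filter.mpr ⟨Finset.mem_univ _, by simpa using hviol⟩
      have hle := Finset.min'_le _ _ hmem2
      exact absurd hlt (not_lt.mpr hle)
end

section
/- Let v(y) = inf_x { cᵀ x : (x, y) ∈ P } where P ⊆ ℝ^{n_x} × ℝ^{n_y} is a generalized polyhedron with closure P̄. Then for every y, if y ∈ proj_y(P) then v(y) = inf_x { cᵀ x : (x, y) ∈ P̄ }, and if y ∉ proj_y(P) then v(y) = +∞. -/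
/-!
A point `x̄` of the fibre of `P̄` over `y` satisfies the strict inequalities weakly, so moving it
any positive fraction of the way towards a point `x₀` of the fibre of `P` makes every strict
inequality hold again. Hence the fibre of `P̄` lies in the closure of the fibre of `P`, and the
continuous objective has the same infimum on both.
-/

open Filter Topology
open scoped Matrix

section Infimum

variable {X α : Type*} [TopologicalSpace X] [CompleteLattice α] [TopologicalSpace α]
  [ClosedIciTopology α]

theorem iInf_subtype_le_of_subset_closure {f : X → α} (hf : Continuous f) {S T : Set X}
    (hT : T ⊆ closure S) : ⨅ x : S, f x ≤ ⨅ x : T, f x := by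
  have hclosed : IsClosed {z | ⨅ x : S, f x ≤ f z} := isClosed_Ici.preimage hf
  refine le_iInf fun x => closure_minimal (fun z hz => ?_) hclosed (hT x.2)
  exact iInf_le (fun x : S => f x) ⟨z, hz⟩

end Infimum

section Polyhedron

variable {ι κ n p : Type*} [Fintype n] [Fintype p]

theorem lt_lineMap_of_le_of_lt {d u w t : ℝ} (hu : d ≤ u) (hw : d < w) (ht₀ : 0 < t)
    (ht₁ : t ≤ 1) : d < AffineMap.lineMap u w t := by
  rw [AffineMap.lineMap_apply_module, smul_eq_mul, smul_eq_mul]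
  nlinarith

theorem le_lineMap_of_le_of_le {d u w t : ℝ} (hu : d ≤ u) (hw : d ≤ w) (ht₀ : 0 ≤ t)
    (ht₁ : t ≤ 1) : d ≤ AffineMap.lineMap u w t := by
  rw [AffineMap.lineMap_apply_module, smul_eq_mul, smul_eq_mul]
  nlinarith

theorem mulVec_lineMap_add_mulVec (M : Matrix ι n ℝ) (N : Matrix ι p ℝ) (x x' : n → ℝ)
    (y : p → ℝ) (t : ℝ) (i : ι) :
    (M *ᵥ AffineMap.lineMap x x' t) i + (N *ᵥ y) i =
      AffineMap.lineMap ((M *ᵥ x) i + (N *ᵥ y) i) ((M *ᵥ x') i + (N *ᵥ y) i) t := by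
  simp only [AffineMap.lineMap_apply_module, Matrix.mulVec_add, Matrix.mulVec_smul,
    Pi.add_apply, Pi.smul_apply, smul_eq_mul]
  ring

variable (A : Matrix ι n ℝ) (B : Matrix ι p ℝ) (C : Matrix κ n ℝ) (D : Matrix κ p ℝ)
  (a : ι → ℝ) (c' : κ → ℝ)

def genPolyhedron : Set ((n → ℝ) × (p → ℝ)) :=
  {z | a ≤ A *ᵥ z.1 + B *ᵥ z.2 ∧ ∀ i, c' i < (C *ᵥ z.1) i + (D *ᵥ z.2) i}

def relaxedPolyhedron : Set ((n → ℝ) × (p → ℝ)) :=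
  {z | a ≤ A *ᵥ z.1 + B *ᵥ z.2 ∧ ∀ i, c' i ≤ (C *ᵥ z.1) i + (D *ᵥ z.2) i}

theorem isClosed_relaxedPolyhedron : IsClosed (relaxedPolyhedron A B C D a c') := by
  have hAB : Continuous fun z : (n → ℝ) × (p → ℝ) => A *ᵥ z.1 + B *ᵥ z.2 := by fun_prop
  have hCD : Continuous fun z : (n → ℝ) × (p → ℝ) => C *ᵥ z.1 + D *ᵥ z.2 := by fun_prop
  exact (isClosed_le continuous_const hAB).inter (isClosed_le continuous_const hCD)

theorem closure_genPolyhedron_subset :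
    closure (genPolyhedron A B C D a c') ⊆ relaxedPolyhedron A B C D a c' :=
  closure_minimal (fun _ hz => ⟨hz.1, fun i => (hz.2 i).le⟩)
    (isClosed_relaxedPolyhedron A B C D a c')

variable {A B C D a c'}

theorem lineMap_mem_genPolyhedron {x₀ xb : n → ℝ} {y : p → ℝ}
    (h₀ : (x₀, y) ∈ genPolyhedron A B C D a c') (hb : (xb, y) ∈ relaxedPolyhedron A B C D a c')
    {t : ℝ} (ht₀ : 0 < t) (ht₁ : t ≤ 1) :
    (AffineMap.lineMap xb x₀ t, y) ∈ genPolyhedron A B C D a c' := by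
  refine ⟨fun i => ?_, fun i => ?_⟩
  · have := mulVec_lineMap_add_mulVec A B xb x₀ y t i
    simp only [Pi.add_apply] at this ⊢
    exact this ▸ le_lineMap_of_le_of_le (hb.1 i) (h₀.1 i) ht₀.le ht₁
  · rw [mulVec_lineMap_add_mulVec]
    exact lt_lineMap_of_le_of_lt (hb.2 i) (h₀.2 i) ht₀ ht₁

theorem mem_closure_fiber_genPolyhedron {x₀ xb : n → ℝ} {y : p → ℝ}
    (h₀ : (x₀, y) ∈ genPolyhedron A B C D a c') (hb : (xb, y) ∈ relaxedPolyhedron A B C D a c') :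
    xb ∈ closure {x | (x, y) ∈ genPolyhedron A B C D a c'} := by
  have hlim : Tendsto (AffineMap.lineMap xb x₀) (𝓝[>] (0 : ℝ)) (𝓝 xb) := by
    simpa using (AffineMap.lineMap_continuous (p := xb) (q := x₀)).tendsto' 0 _ (by simp)
      |>.mono_left nhdsWithin_le_nhds
  refine mem_closure_of_tendsto hlim ?_
  filter_upwards [Ioc_mem_nhdsGT one_pos] with t ht
  exact lineMap_mem_genPolyhedron h₀ hb ht.1 ht.2

end Polyhedron

/-- for v(y) = inf { cᵀx : (x,y) ∈ P } with P a generalized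
polyhedron and P̄ its topological closure: if y ∈ proj_y(P) then
v(y) = inf { cᵀx : (x,y) ∈ P̄ }; if y ∉ proj_y(P) then v(y) = +∞. -/
theorem stmt_9 {nx ny m m' : ℕ}
    (A : Matrix (Fin m) (Fin nx) ℝ) (B : Matrix (Fin m) (Fin ny) ℝ)
    (C : Matrix (Fin m') (Fin nx) ℝ) (D : Matrix (Fin m') (Fin ny) ℝ)
    (a : Fin m → ℝ) (c' : Fin m' → ℝ) (c : Fin nx → ℝ)
    (P : Set ((Fin nx → ℝ) × (Fin ny → ℝ)))
    (hP : P = {z | a ≤ A.mulVec z.1 + B.mulVec z.2 ∧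
                   ∀ i, c' i < C.mulVec z.1 i + D.mulVec z.2 i})
    (v : (Fin ny → ℝ) → EReal)
    (hv : ∀ y, v y = ⨅ x : {x : Fin nx → ℝ // (x, y) ∈ P},
      ((∑ j, c j * (x : Fin nx → ℝ) j : ℝ) : EReal)) :
    ∀ y : Fin ny → ℝ,
      ((∃ x, (x, y) ∈ P) →
        v y = ⨅ x : {x : Fin nx → ℝ // (x, y) ∈ closure P},
          ((∑ j, c j * (x : Fin nx → ℝ) j : ℝ) : EReal)) ∧
      ((¬ ∃ x, (x, y) ∈ P) → v y = ⊤) := by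
  change P = genPolyhedron A B C D a c' at hP
  subst hP
  intro y
  rw [hv y]
  refine ⟨fun ⟨x₀, h₀⟩ => le_antisymm ?_ ?_, fun hempty => ?_⟩
  · have hcost : Continuous fun x : Fin nx → ℝ => ((∑ j, c j * x j : ℝ) : EReal) :=
      continuous_coe_real_ereal.comp (by fun_prop)
    exact iInf_subtype_le_of_subset_closure hcost fun xb hb =>
      mem_closure_fiber_genPolyhedron h₀ (closure_genPolyhedron_subset A B C D a c' hb)
  · exact iInf_mono' fun x => ⟨⟨x, subset_closure x.2⟩, le_rfl⟩
  · have : IsEmpty {x // (x, y) ∈ genPolyhedron A B C D a c'} := ⟨fun x => hempty ⟨x, x.2⟩⟩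
    exact iInf_of_empty _
end

section
/- If a bilevel LP with rational data (leader constraints A₁₁ x₁ + A₁₂ x₂ ≥ b₁, follower solving min { c₂₂ᵀ x₂ : A₂₁ x₁ + A₂₂ x₂ ≥ b₂ }) has a feasible point, then it has a rational feasible point. -/
/-!
Let `(x₁, x₂)` be feasible and let `T` be the set of follower constraints tight at it. The
rational system made of all leader and follower constraints, those in `T` imposed as equalities,
has the real solution `(x₁, x₂)`, hence a rational solution `(q₁, q₂)`: by Fourier–Motzkin
elimination, a rational system of linear inequalities that is solvable over an ordered field is
solvable over `ℚ`. The point `(q₁, q₂)` is again bilevel feasible, because optimality of a point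
of an LP only depends on its tight constraints: for any `x₂'` feasible at `q₁`, the point `x₂`
can move a little in the direction `x₂' - q₂` without leaving the follower's feasible set at `x₁`,
so this direction does not decrease the objective.
-/

open Matrix Filter Topology

theorem exists_between_finsets_of_le {α : Type*} [LinearOrder α] [Nonempty α] (L U : Finset α)
    (h : ∀ l ∈ L, ∀ u ∈ U, l ≤ u) : ∃ t, (∀ l ∈ L, l ≤ t) ∧ ∀ u ∈ U, t ≤ u := by
  by_cases hL : L.Nonempty
  · exact ⟨L.max' hL, fun l hl => L.le_max' l hl, fun u hu => h _ (L.max'_mem hL) u hu⟩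
  by_cases hU : U.Nonempty
  · exact ⟨U.min' hU, fun l hl => h l hl _ (U.min'_mem hU), fun u hu => U.min'_le u hu⟩
  obtain ⟨t⟩ := ‹Nonempty α›
  exact ⟨t, fun l hl => (hL ⟨l, hl⟩).elim, fun u hu => (hU ⟨u, hu⟩).elim⟩

namespace Matrix

def IneqSolvable (K : Type*) [Field K] [LE K] {ι κ : Type*} [Fintype κ] (A : Matrix ι κ ℚ)
    (b : ι → ℚ) : Prop :=
  ∃ x : κ → K, (fun i => (b i : K)) ≤ A.map (↑) *ᵥ x

theorem ineqSolvable_rat_iff {ι κ : Type*} [Fintype κ] {A : Matrix ι κ ℚ} {b : ι → ℚ} :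
    IneqSolvable ℚ A b ↔ ∃ q, b ≤ A *ᵥ q := by
  simp [IneqSolvable]

theorem ineqSolvable_submatrix_equiv {K : Type*} [Field K] [LE K] {ι κ κ' : Type*} [Fintype κ]
    [Fintype κ'] {A : Matrix ι κ ℚ} {b : ι → ℚ} (e : κ' ≃ κ) :
    IneqSolvable K (A.submatrix id e) b ↔ IneqSolvable K A b := by
  simp only [IneqSolvable, ← submatrix_map, submatrix_mulVec_equiv]
  exact ⟨fun ⟨_, hx⟩ => ⟨_, hx⟩, fun ⟨x, hx⟩ => ⟨x ∘ e, by simpa [Function.comp_assoc] using hx⟩⟩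

theorem map_ratCast_mulVec {K : Type*} [DivisionRing K] [CharZero K] {ι κ : Type*} [Fintype κ]
    (A : Matrix ι κ ℚ) (q : κ → ℚ) :
    A.map (↑) *ᵥ (fun j => (q j : K)) = fun i => ((A *ᵥ q) i : K) :=
  funext fun i => (RingHom.map_mulVec (Rat.castHom K) A q i).symm

end Matrix

section OrderedField

variable {K : Type*} [Field K] [LinearOrder K] [IsStrictOrderedRing K]

theorem exists_forall_le_mul_iff {ι : Type*} [Fintype ι] (a c : ι → K) :
    (∃ t, ∀ i, c i ≤ a i * t) ↔
      (∀ i, a i = 0 → c i ≤ 0) ∧ ∀ i k, 0 < a i → a k < 0 → a i * c k ≤ a k * c i := by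
  classical
  constructor
  · rintro ⟨t, ht⟩
    refine ⟨fun i hi => by simpa [hi] using ht i, fun i k hi hk => ?_⟩
    nlinarith [ht i, ht k]
  · rintro ⟨hzero, hpair⟩
    obtain ⟨t, hlower, hupper⟩ := exists_between_finsets_of_le
      (({i | 0 < a i} : Finset ι).image fun i => c i / a i)
      (({k | a k < 0} : Finset ι).image fun k => c k / a k) (by
        simp only [Finset.mem_image, Finset.mem_filter, Finset.mem_univ, true_and]
        rintro _ ⟨i, hi, rfl⟩ _ ⟨k, hk, rfl⟩
        rw [div_le_iff₀ hi, div_mul_eq_mul_div, le_div_iff_of_neg hk]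
        linarith [hpair i k hi hk])
    refine ⟨t, fun i => ?_⟩
    rcases lt_trichotomy (a i) 0 with hi | hi | hi
    · have := hupper _ (Finset.mem_image_of_mem _ (by simpa using hi))
      rw [le_div_iff_of_neg hi] at this
      linarith
    · simpa [hi] using hzero i hi
    · have := hlower _ (Finset.mem_image_of_mem _ (by simpa using hi))
      rw [div_le_iff₀ hi] at this
      linarith

namespace FourierMotzkin

variable {ι : Type*} {n : ℕ} (A : Matrix ι (Fin (n + 1)) ℚ) (b : ι → ℚ)

/- Eliminating the first variable: a row `i` bounding it from below and a row `k` bounding it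
from above combine into `A i 0 • (row k) - A k 0 • (row i)`; rows not involving it are kept. -/
abbrev Row := {p : ι × ι // 0 < A p.1 0 ∧ A p.2 0 < 0} ⊕ {i // A i 0 = 0}

def matrix : Matrix (Row A) (Fin n) ℚ :=
  of <| Sum.elim (fun p j => A p.1.1 0 * A p.1.2 j.succ - A p.1.2 0 * A p.1.1 j.succ)
    (fun i j => A i.1 j.succ)

def rhs : Row A → ℚ :=
  Sum.elim (fun p => A p.1.1 0 * b p.1.2 - A p.1.2 0 * b p.1.1) (fun i => b i.1)

variable [Fintype ι]

theorem exists_le_mulVec_cons_iff (y : Fin n → K) :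
    (∃ t : K, (fun i => (b i : K)) ≤ A.map (↑) *ᵥ Fin.cons t y) ↔
      (fun r => (rhs A b r : K)) ≤ (matrix A).map (↑) *ᵥ y := by
  set r : ι → K := fun i => ∑ j, (A i j.succ : K) * y j
  have hcons (t : K) (i : ι) : (A.map (↑) *ᵥ Fin.cons t y) i = (A i 0 : K) * t + r i := by
    simp [r, mulVec, dotProduct, Fin.sum_univ_succ]
  have hpair (i k : ι) : ∑ j, ((A i 0 : K) * A k j.succ - A k 0 * A i j.succ) * y j =
      A i 0 * r k - A k 0 * r i := by
    simp only [r, sub_mul, Finset.sum_sub_distrib, Finset.mul_sum, mul_assoc]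
  simp only [Pi.le_def, hcons, ← sub_le_iff_le_add, exists_forall_le_mul_iff, Sum.forall,
    Subtype.forall, Prod.forall, Rat.cast_eq_zero, Rat.cast_pos, Rat.cast_lt_zero]
  simp only [rhs, matrix, mulVec, dotProduct, map_apply, of_apply, Sum.elim_inl, Sum.elim_inr,
    Rat.cast_sub, Rat.cast_mul, hpair, and_imp]
  rw [and_comm]
  refine and_congr (forall₄_congr fun i k _ _ => ?_) (forall₂_congr fun i _ => ?_)
  · constructor <;> intro <;> linarith
  · exact sub_nonpos

end FourierMotzkin

theorem Matrix.IneqSolvable.rat_of_fin : ∀ {n : ℕ} {ι : Type*} [Fintype ι]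
    {A : Matrix ι (Fin n) ℚ} {b : ι → ℚ}, IneqSolvable K A b → IneqSolvable ℚ A b
  | 0, _, _, A, b, ⟨x, hx⟩ => by
    refine ⟨0, fun i => ?_⟩
    have := hx i
    simp_all [Subsingleton.elim x 0]
  | n + 1, _, _, A, b, ⟨x, hx⟩ => by
    rw [← Fin.cons_self_tail x] at hx
    obtain ⟨y, hy⟩ :=
      rat_of_fin ⟨_, (FourierMotzkin.exists_le_mulVec_cons_iff A b _).1 ⟨_, hx⟩⟩
    obtain ⟨t, ht⟩ := (FourierMotzkin.exists_le_mulVec_cons_iff A b y).2 hy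
    exact ⟨_, ht⟩

theorem Matrix.IneqSolvable.rat {ι κ : Type*} [Fintype ι] [Fintype κ] {A : Matrix ι κ ℚ}
    {b : ι → ℚ} (h : IneqSolvable K A b) : IneqSolvable ℚ A b := by
  have e := Fintype.equivFin κ
  rw [← ineqSolvable_submatrix_equiv e.symm] at h ⊢
  exact h.rat_of_fin

theorem Matrix.exists_rat_le_mulVec_tight_of_le_mulVec {ι κ : Type*} [Fintype ι] [Fintype κ]
    (A : Matrix ι κ ℚ) (b : ι → ℚ) (x : κ → K) (hx : (fun i => (b i : K)) ≤ A.map (↑) *ᵥ x) :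
    ∃ q : κ → ℚ, b ≤ A *ᵥ q ∧ ∀ i, (A.map (↑) *ᵥ x) i = b i → (A *ᵥ q) i = b i := by
  classical
  let T := {i // (A.map (↑) *ᵥ x) i = b i}
  -- the rows tight at `x` are added once more, reversed
  obtain ⟨q, hq⟩ := ineqSolvable_rat_iff.1 (IneqSolvable.rat (K := K)
    (A := fromRows A (-A.submatrix (Subtype.val : T → ι) id)) (b := Sum.elim b fun i => -b i) ⟨x, by
      simp only [Pi.le_def, Sum.forall, fromRows_map, fromRows_mulVec, Sum.elim_inl, Sum.elim_inr]
      refine ⟨hx, fun i => ?_⟩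
      rw [Matrix.map_neg _ Rat.cast_neg, ← submatrix_map, neg_mulVec, Rat.cast_neg]
      exact neg_le_neg i.2.le⟩)
  simp only [Pi.le_def, Sum.forall, fromRows_mulVec, Sum.elim_inl, Sum.elim_inr] at hq
  refine ⟨q, hq.1, fun i hi => le_antisymm ?_ (hq.1 i)⟩
  have := hq.2 ⟨i, hi⟩
  rw [neg_mulVec] at this
  exact neg_le_neg_iff.1 this

end OrderedField

section TightConstraints

variable {ι κ : Type*} [Fintype ι] [Fintype κ] {A : Matrix ι κ ℝ} {β : ι → ℝ} {c x d : κ → ℝ}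

theorem eventually_le_mulVec_add_smul (hx : β ≤ A *ᵥ x)
    (hd : ∀ i, (A *ᵥ x) i = β i → 0 ≤ (A *ᵥ d) i) :
    ∀ᶠ t in 𝓝[>] (0 : ℝ), β ≤ A *ᵥ (x + t • d) := by
  simp only [Pi.le_def, mulVec_add, mulVec_smul, Pi.add_apply, Pi.smul_apply, smul_eq_mul]
  refine eventually_all.2 fun i => ?_
  rcases (hx i).eq_or_lt with h | h
  · filter_upwards [self_mem_nhdsWithin] with t (ht : 0 < t)
    nlinarith [hd i h.symm]
  · have : Tendsto (fun t : ℝ => (A *ᵥ x) i + t * (A *ᵥ d) i) (𝓝 0) (𝓝 ((A *ᵥ x) i)) :=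
      (by fun_prop : Continuous fun t : ℝ => (A *ᵥ x) i + t * (A *ᵥ d) i).tendsto' 0 _ (by simp)
    exact ((this.eventually (lt_mem_nhds h)).filter_mono nhdsWithin_le_nhds).mono
      fun _ => le_of_lt

theorem IsMinOn.dotProduct_nonneg_of_tight (hmin : IsMinOn (c ⬝ᵥ ·) {z | β ≤ A *ᵥ z} x)
    (hx : β ≤ A *ᵥ x) (hd : ∀ i, (A *ᵥ x) i = β i → 0 ≤ (A *ᵥ d) i) : 0 ≤ c ⬝ᵥ d := by
  obtain ⟨t, ht, htpos⟩ := ((eventually_le_mulVec_add_smul hx hd).and self_mem_nhdsWithin).exists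
  have := isMinOn_iff.1 hmin _ ht
  rw [dotProduct_add, dotProduct_smul, smul_eq_mul, le_add_iff_nonneg_right] at this
  exact nonneg_of_mul_nonneg_right this htpos

theorem IsMinOn.of_tight_imp_tight {β' : ι → ℝ} {y : κ → ℝ}
    (hmin : IsMinOn (c ⬝ᵥ ·) {z | β ≤ A *ᵥ z} x) (hx : β ≤ A *ᵥ x)
    (htight : ∀ i, (A *ᵥ x) i = β i → (A *ᵥ y) i = β' i) :
    IsMinOn (c ⬝ᵥ ·) {z | β' ≤ A *ᵥ z} y := by
  refine isMinOn_iff.2 fun z hz => ?_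
  have := hmin.dotProduct_nonneg_of_tight hx (d := z - y) fun i hi => by
    rw [mulVec_sub, Pi.sub_apply, htight i hi, sub_nonneg]
    exact hz i
  rwa [dotProduct_sub, sub_nonneg] at this

end TightConstraints

/-- a feasible bilevel LP with rational data has a rational
feasible point. -/
theorem stmt_15 {n₁ n₂ m₁ m₂ : ℕ}
    (A₁₁ : Matrix (Fin m₁) (Fin n₁) ℚ) (A₁₂ : Matrix (Fin m₁) (Fin n₂) ℚ)
    (A₂₁ : Matrix (Fin m₂) (Fin n₁) ℚ) (A₂₂ : Matrix (Fin m₂) (Fin n₂) ℚ)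
    (b₁ : Fin m₁ → ℚ) (b₂ : Fin m₂ → ℚ) (c₂₂ : Fin n₂ → ℚ)
    (Feas : Set ((Fin n₁ → ℝ) × (Fin n₂ → ℝ)))
    (hFeas : Feas = {z |
      (fun i => (b₁ i : ℝ)) ≤
        (A₁₁.map ((↑·) : ℚ → ℝ)).mulVec z.1 + (A₁₂.map ((↑·) : ℚ → ℝ)).mulVec z.2 ∧
      (fun i => (b₂ i : ℝ)) ≤
        (A₂₁.map ((↑·) : ℚ → ℝ)).mulVec z.1 + (A₂₂.map ((↑·) : ℚ → ℝ)).mulVec z.2 ∧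
      ∀ x₂' : Fin n₂ → ℝ,
        (fun i => (b₂ i : ℝ)) ≤
          (A₂₁.map ((↑·) : ℚ → ℝ)).mulVec z.1 + (A₂₂.map ((↑·) : ℚ → ℝ)).mulVec x₂' →
        ∑ j, (c₂₂ j : ℝ) * z.2 j ≤ ∑ j, (c₂₂ j : ℝ) * x₂' j})
    (hne : Feas.Nonempty) :
    ∃ (q₁ : Fin n₁ → ℚ) (q₂ : Fin n₂ → ℚ),
      ((fun j => (q₁ j : ℝ)), (fun j => (q₂ j : ℝ))) ∈ Feas := by
  subst hFeas
  obtain ⟨⟨x₁, x₂⟩, hlead, hfoll, hopt⟩ := hne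
  obtain ⟨q, hq, htight⟩ := exists_rat_le_mulVec_tight_of_le_mulVec
    (fromBlocks A₁₁ A₁₂ A₂₁ A₂₂) (Sum.elim b₁ b₂) (Sum.elim x₁ x₂) (by
      simpa [Pi.le_def, Sum.forall, fromBlocks_map, fromBlocks_mulVec] using ⟨hlead, hfoll⟩)
  simp only [Pi.le_def, Sum.forall, fromBlocks_mulVec, fromBlocks_map, Sum.elim_inl, Sum.elim_inr,
    Sum.elim_comp_inl, Sum.elim_comp_inr, Pi.add_apply] at hq htight
  refine ⟨q ∘ Sum.inl, q ∘ Sum.inr, fun i => ?_, fun i => ?_, ?_⟩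
  · simp only [Pi.add_apply, map_ratCast_mulVec]
    exact_mod_cast hq.1 i
  · simp only [Pi.add_apply, map_ratCast_mulVec]
    exact_mod_cast hq.2 i
  have hmin : IsMinOn ((fun j => (c₂₂ j : ℝ)) ⬝ᵥ ·)
      {z | (fun i => (b₂ i : ℝ)) - A₂₁.map (↑) *ᵥ x₁ ≤ A₂₂.map (↑) *ᵥ z} x₂ :=
    isMinOn_iff.2 fun z hz => hopt z (sub_le_iff_le_add'.1 hz)
  have hmin_q := hmin.of_tight_imp_tight (sub_le_iff_le_add'.2 hfoll)
    (β' := (fun i => (b₂ i : ℝ)) - A₂₁.map (↑) *ᵥ fun j => (q (Sum.inl j) : ℝ))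
    (y := fun j => (q (Sum.inr j) : ℝ)) fun i hi => by
      rw [Pi.sub_apply, eq_sub_iff_add_eq'] at hi ⊢
      simp only [map_ratCast_mulVec]
      exact_mod_cast htight.2 i hi
  exact fun x₂' hx₂' => isMinOn_iff.1 hmin_q x₂' (sub_le_iff_le_add'.2 hx₂')
end

section
/- The value function of a rational LP in the right-hand-side-free parameter form is piecewise linear: v(y) = inf_x { cᵀ x : A x + B y ≥ b } (with A, B, b, c rational) is a function of y that is, on each cell of a finite partition of ℝ^{n_y} into rational generalized polyhedra, either a rational affine-linear function of y, identically +∞, or identically −∞. -/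
/-!
Fourier–Motzkin elimination of `x` from the epigraph system `cᵀx ≤ t, A x + B y ≥ b` leaves
finitely many rational inequalities `α k * t + β k y ≥ 0`, so `v y` is the infimum of a
one-dimensional polyhedron in `t`. That set is empty iff `β k y < 0` for some `k` with `α k = 0`
or `α i * β j y - α j * β i y < 0` for some `α i > 0 > α j`; it is unbounded below if no `α k`
is positive; otherwise its minimum is `-β i₀ y / α i₀` for any `i₀` with `α i₀ > 0` and
`α i₀ * β j y - α j * β i₀ y ≥ 0` whenever `α j ≠ 0`. All of this depends only on the signs of
the rational affine functions `β k` and `α i • β j - α j • β i`, so the cells of constant sign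
pattern form the required partition.
-/

/-- A rational generalized polyhedron in ℝⁿ. -/
def IsRatGenPolyhedron {n : ℕ} (P : Set (Fin n → ℝ)) : Prop :=
  ∃ (m m' : ℕ) (A : Matrix (Fin m) (Fin n) ℚ) (B : Matrix (Fin m') (Fin n) ℚ)
    (a : Fin m → ℚ) (b : Fin m' → ℚ),
    P = {x | (fun i => (a i : ℝ)) ≤ (A.map ((↑·) : ℚ → ℝ)).mulVec x ∧
             ∀ i, (b i : ℝ) < (B.map ((↑·) : ℚ → ℝ)).mulVec x i}

section OneVariable

variable {ι : Type*} (α β : ι → ℝ)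

/-- `i₀` maximizes the lower bound `-β i / α i` on `t` among the constraints with `α i > 0`. -/
theorem exists_index_max_lower_bound [Fintype ι] (hpos : ∃ i, 0 < α i) :
    ∃ i₀, 0 < α i₀ ∧ ∀ j, 0 < α j → 0 ≤ α i₀ * β j - α j * β i₀ := by
  classical
  obtain ⟨i, hi⟩ := hpos
  obtain ⟨i₀, hi₀, hmax⟩ := Finset.exists_max_image {i | 0 < α i} (fun i => -β i / α i)
    ⟨i, by simpa using hi⟩
  rw [Finset.mem_filter_univ] at hi₀
  refine ⟨i₀, hi₀, fun j hj => ?_⟩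
  have := hmax j (by simpa using hj)
  rw [div_le_div_iff₀ hj hi₀] at this
  linarith

variable {α β} in
theorem isLeast_setOf_forall_nonneg_mul_add {i₀ : ι} (hi₀ : 0 < α i₀)
    (hzero : ∀ j, α j = 0 → 0 ≤ β j) (hcmp : ∀ j, α j ≠ 0 → 0 ≤ α i₀ * β j - α j * β i₀) :
    IsLeast {t | ∀ i, 0 ≤ α i * t + β i} (-β i₀ / α i₀) := by
  refine ⟨fun j => ?_, fun t ht => ?_⟩
  · rcases eq_or_ne (α j) 0 with hj | hj
    · simpa [hj] using hzero j hj
    · have : α j * (-β i₀ / α i₀) + β j = (α i₀ * β j - α j * β i₀) / α i₀ := by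
        field_simp; ring
      exact this ▸ div_nonneg (hcmp j hj) hi₀.le
  · have := ht i₀
    rw [div_le_iff₀ hi₀]
    linarith

theorem exists_forall_nonneg_mul_add_iff [Fintype ι] :
    (∃ t, ∀ i, 0 ≤ α i * t + β i) ↔
      (∀ i, α i = 0 → 0 ≤ β i) ∧ ∀ i j, 0 < α i → α j < 0 → 0 ≤ α i * β j - α j * β i := by
  constructor
  · rintro ⟨t, ht⟩
    refine ⟨fun i hi => by simpa [hi] using ht i, fun i j hi hj => ?_⟩
    nlinarith [ht i, ht j]
  · rintro ⟨hzero, hpair⟩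
    by_cases hpos : ∃ i, 0 < α i
    · obtain ⟨i₀, hi₀, hmax⟩ := exists_index_max_lower_bound α β hpos
      refine ⟨_, (isLeast_setOf_forall_nonneg_mul_add hi₀ hzero fun j hj => ?_).1⟩
      exact hj.lt_or_gt.elim (hpair i₀ j hi₀) (hmax j)
    · simp only [not_exists, not_lt] at hpos
      obtain ⟨M, hM⟩ := Finite.exists_ge fun i => -β i / α i
      refine ⟨M, fun i => ?_⟩
      rcases (hpos i).lt_or_eq with hi | hi
      · have := hM i
        rw [le_div_iff_of_neg hi] at this
        linarith
      · simpa [hi] using hzero i hi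

variable {α β} in
theorem isLowerSet_setOf_forall_nonneg_mul_add (h : ∀ i, α i ≤ 0) :
    IsLowerSet {t | ∀ i, 0 ≤ α i * t + β i} := fun s t hts hs i => by
  nlinarith [hs i, h i]

end OneVariable

theorem EReal.sInf_coe_image_eq_bot {S : Set ℝ} (hS : IsLowerSet S) (hne : S.Nonempty) :
    sInf (((↑) : ℝ → EReal) '' S) = ⊥ := by
  obtain ⟨t₀, ht₀⟩ := hne
  refine (EReal.eq_bot_iff_forall_lt _).2 fun y => ?_
  calc sInf (((↑) : ℝ → EReal) '' S) ≤ ↑(min t₀ (y - 1)) :=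
        sInf_le ⟨_, hS (min_le_left _ _) ht₀, rfl⟩
    _ < y := EReal.coe_lt_coe_iff.2 (by linarith [min_le_right t₀ (y - 1)])

theorem EReal.sInf_coe_image_of_isLeast {S : Set ℝ} {t : ℝ} (h : IsLeast S t) :
    sInf (((↑) : ℝ → EReal) '' S) = t :=
  (EReal.coe_strictMono.monotone.map_isLeast h).isGLB.sInf_eq

theorem EReal.iInf_subtype_coe_eq_sInf_coe_image {X : Type*} (p : X → Prop) (f : X → ℝ) :
    (⨅ x : {x // p x}, (f x : EReal)) = sInf (((↑) : ℝ → EReal) '' {t | ∃ x, p x ∧ f x ≤ t}) := by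
  refine le_antisymm (le_sInf ?_) (le_iInf fun x => sInf_le ⟨f x, ⟨x, x.2, le_rfl⟩, rfl⟩)
  rintro _ ⟨t, ⟨x, hx, hxt⟩, rfl⟩
  exact (iInf_le _ ⟨x, hx⟩).trans (EReal.coe_le_coe_iff.2 hxt)

def ratDot {n : ℕ} (q : Fin n → ℚ) (x : Fin n → ℝ) : ℝ := ∑ j, (q j : ℝ) * x j

section RatDot

variable {n : ℕ}

@[simp]
theorem ratDot_sub (q q' : Fin n → ℚ) (x : Fin n → ℝ) :
    ratDot (q - q') x = ratDot q x - ratDot q' x := by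
  simp [ratDot, sub_mul, Finset.sum_sub_distrib]

@[simp]
theorem ratDot_smul (r : ℚ) (q : Fin n → ℚ) (x : Fin n → ℝ) :
    ratDot (r • q) x = r * ratDot q x := by
  simp [ratDot, Finset.mul_sum, mul_assoc]

@[simp]
theorem ratDot_neg (q : Fin n → ℚ) (x : Fin n → ℝ) : ratDot (-q) x = -ratDot q x := by
  simp [ratDot]

@[simp]
theorem ratDot_zero (x : Fin n → ℝ) : ratDot 0 x = 0 := by
  simp [ratDot]

@[simp]
theorem ratDot_of_isEmpty (q : Fin 0 → ℚ) (x : Fin 0 → ℝ) : ratDot q x = 0 := by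
  simp [ratDot]

theorem ratDot_cons (q : Fin (n + 1) → ℚ) (s : ℝ) (x : Fin n → ℝ) :
    ratDot q (Fin.cons s x) = q 0 * s + ratDot (Fin.tail q) x := by
  simp [ratDot, Fin.sum_univ_succ, Fin.tail]

theorem Matrix.mulVec_map_ratCast_apply {m : ℕ} (A : Matrix (Fin m) (Fin n) ℚ)
    (x : Fin n → ℝ) (i : Fin m) :
    (A.map ((↑·) : ℚ → ℝ)).mulVec x i = ratDot (fun j => A i j) x := by
  simp [Matrix.mulVec, dotProduct, ratDot]

end RatDot

/-- Rational affine functions `y ↦ ∑ j, q j * y j + r` on `ℝⁿ`, encoded as `(q, r)`. -/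
abbrev RatAff (n : ℕ) := (Fin n → ℚ) × ℚ

namespace RatAff

variable {n : ℕ}

def eval (f : RatAff n) (y : Fin n → ℝ) : ℝ := ratDot f.1 y + f.2

@[simp]
theorem eval_sub (f g : RatAff n) (y : Fin n → ℝ) : (f - g).eval y = f.eval y - g.eval y := by
  simp [eval]; ring

@[simp]
theorem eval_smul (r : ℚ) (f : RatAff n) (y : Fin n → ℝ) : (r • f).eval y = r * f.eval y := by
  simp [eval]; ring

@[simp]
theorem eval_neg (f : RatAff n) (y : Fin n → ℝ) : (-f).eval y = -f.eval y := by
  simp [eval]; ring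

theorem eval_cons (f : RatAff (n + 1)) (t : ℝ) (y : Fin n → ℝ) :
    f.eval (Fin.cons t y) = f.1 0 * t + eval (Fin.tail f.1, f.2) y := by
  simp [eval, ratDot_cons]; ring

end RatAff

/-- The linear inequality `0 ≤ ∑ j, a j * x j + f z` in the variables `(x, z)`, encoded as
`(a, f)`. -/
abbrev LinCon (nx nz : ℕ) := (Fin nx → ℚ) × RatAff nz

namespace LinCon

variable {nx nz : ℕ}

def eval (c : LinCon nx nz) (x : Fin nx → ℝ) (z : Fin nz → ℝ) : ℝ := ratDot c.1 x + c.2.eval z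

def dropFirst (c : LinCon (nx + 1) nz) : LinCon nx nz := (Fin.tail c.1, c.2)

theorem eval_cons (c : LinCon (nx + 1) nz) (s : ℝ) (x : Fin nx → ℝ) (z : Fin nz → ℝ) :
    c.eval (Fin.cons s x) z = c.1 0 * s + c.dropFirst.eval x z := by
  simp [eval, dropFirst, ratDot_cons]; ring

/-- For `c.1 0 > 0 > c'.1 0` this is a positive combination in which the first variable
cancels. -/
def combine (c c' : LinCon (nx + 1) nz) : LinCon nx nz :=
  c.1 0 • c'.dropFirst - c'.1 0 • c.dropFirst

theorem eval_combine (c c' : LinCon (nx + 1) nz) (x : Fin nx → ℝ) (z : Fin nz → ℝ) :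
    (combine c c').eval x z = c.1 0 * c'.dropFirst.eval x z - c'.1 0 * c.dropFirst.eval x z := by
  simp [combine, eval]; ring

/-- One step of Fourier–Motzkin elimination of the first variable. -/
def elimFirst {ι : Type*} (c : ι → LinCon (nx + 1) nz) :
    {i // (c i).1 0 = 0} ⊕ {p : ι × ι // 0 < (c p.1).1 0 ∧ (c p.2).1 0 < 0} → LinCon nx nz
  | .inl i => (c i).dropFirst
  | .inr p => combine (c p.1.1) (c p.1.2)

theorem exists_cons_iff_elimFirst {ι : Type*} [Fintype ι] (c : ι → LinCon (nx + 1) nz)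
    (x : Fin nx → ℝ) (z : Fin nz → ℝ) :
    (∃ s, ∀ i, 0 ≤ (c i).eval (Fin.cons s x) z) ↔ ∀ k, 0 ≤ (elimFirst c k).eval x z := by
  simp_rw [eval_cons]
  rw [exists_forall_nonneg_mul_add_iff (fun i => ((c i).1 0 : ℝ))
    fun i => (c i).dropFirst.eval x z]
  simp only [Sum.forall, Subtype.forall, Prod.forall, elimFirst, eval_combine, Rat.cast_eq_zero,
    Rat.cast_pos, Rat.cast_lt_zero]
  grind

theorem exists_ratAff_forall_nonneg_iff (nx : ℕ) {ι : Type} [Fintype ι] (c : ι → LinCon nx nz) :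
    ∃ (κ : Type) (_ : Fintype κ) (d : κ → RatAff nz),
      ∀ z, (∃ x, ∀ i, 0 ≤ (c i).eval x z) ↔ ∀ k, 0 ≤ (d k).eval z := by
  induction nx generalizing ι with
  | zero => exact ⟨ι, inferInstance, fun i => (c i).2, fun z => by simp [eval]⟩
  | succ nx ih =>
    classical
    obtain ⟨κ, _, d, hd⟩ := ih (elimFirst c)
    refine ⟨κ, inferInstance, d, fun z => ?_⟩
    rw [Fin.exists_fin_succ_pi, exists_comm, ← hd]
    exact exists_congr fun x => exists_cons_iff_elimFirst c x z

end LinCon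

theorem isRatGenPolyhedron_setOf {n : ℕ} {ι ι' : Type*} [Fintype ι] [Fintype ι']
    (f : ι → RatAff n) (g : ι' → RatAff n) :
    IsRatGenPolyhedron {y | (∀ i, 0 ≤ (f i).eval y) ∧ ∀ i, 0 < (g i).eval y} := by
  let e := (Fintype.equivFin ι).symm
  let e' := (Fintype.equivFin ι').symm
  refine ⟨_, _, .of fun r => (f (e r)).1, .of fun r => (g (e' r)).1,
    fun r => -(f (e r)).2, fun r => -(g (e' r)).2, ?_⟩
  ext y
  simp only [Set.mem_ofPred_eq, Pi.le_def, Matrix.mulVec_map_ratCast_apply]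
  simp [e.forall_congr_left, e'.forall_congr_left, RatAff.eval, neg_le_iff_add_nonneg,
    neg_lt_iff_pos_add]

def signCell {n : ℕ} {κ : Type*} (f : κ → RatAff n) (s : κ → Bool) : Set (Fin n → ℝ) :=
  {y | ∀ k, 0 ≤ (f k).eval y ↔ s k}

namespace signCell

variable {n : ℕ} {κ : Type*} (f : κ → RatAff n)

theorem isRatGenPolyhedron [Fintype κ] (s : κ → Bool) : IsRatGenPolyhedron (signCell f s) := by
  convert isRatGenPolyhedron_setOf (fun k : {k // s k} => f k) fun k : {k // s k = false} => -f k
    using 1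
  ext y
  simp only [signCell, Set.mem_ofPred_eq, RatAff.eval_neg, neg_pos, Subtype.forall]
  refine ⟨fun h => ⟨fun k hk => (h k).2 hk, fun k hk => ?_⟩, fun ⟨hpos, hneg⟩ k => ?_⟩
  · exact lt_of_not_ge fun h' => by simpa [hk] using (h k).1 h'
  · cases hk : s k
    · simpa using hneg k hk
    · simpa using hpos k hk

theorem pairwise_disjoint : Pairwise (Function.onFun Disjoint (signCell f)) := by
  intro s s' hss'
  refine Set.disjoint_left.2 fun y hy hy' => hss' (funext fun k => ?_)
  exact Bool.eq_iff_iff.2 ((hy k).symm.trans (hy' k))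

theorem iUnion_eq_univ : ⋃ s, signCell f s = Set.univ := by
  classical
  exact Set.eq_univ_of_forall fun y => Set.mem_iUnion.2 ⟨fun k => decide (0 ≤ (f k).eval y), by
    simp [signCell]⟩

variable {f} in
theorem nonneg_iff_of_mem {s : κ → Bool} {y y' : Fin n → ℝ} (hy : y ∈ signCell f s)
    (hy' : y' ∈ signCell f s) (k : κ) : 0 ≤ (f k).eval y ↔ 0 ≤ (f k).eval y' :=
  (hy k).trans (hy' k).symm

end signCell

def IsRatAffineOrInfiniteOn {n : ℕ} (v : (Fin n → ℝ) → EReal) (P : Set (Fin n → ℝ)) : Prop :=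
  (∃ (c' : Fin n → ℚ) (d : ℚ), ∀ y ∈ P,
      v y = ((∑ j, (c' j : ℝ) * y j + (d : ℝ) : ℝ) : EReal)) ∨
    (∀ y ∈ P, v y = ⊤) ∨ (∀ y ∈ P, v y = ⊥)

theorem exists_partition_of_isRatAffineOrInfiniteOn_signCell {n : ℕ} {κ : Type*} [Fintype κ]
    (f : κ → RatAff n) (v : (Fin n → ℝ) → EReal)
    (hv : ∀ s, IsRatAffineOrInfiniteOn v (signCell f s)) :
    ∃ (k : ℕ) (P : Fin k → Set (Fin n → ℝ)),
      (∀ l, IsRatGenPolyhedron (P l)) ∧ Pairwise (Function.onFun Disjoint P) ∧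
      (⋃ l, P l) = Set.univ ∧ ∀ l, IsRatAffineOrInfiniteOn v (P l) := by
  classical
  let e := (Fintype.equivFin (κ → Bool)).symm
  refine ⟨_, fun l => signCell f (e l), fun l => signCell.isRatGenPolyhedron f _,
    (signCell.pairwise_disjoint f).comp_of_injective e.injective, ?_, fun l => hv _⟩
  rw [e.surjective.iUnion_comp (signCell f), signCell.iUnion_eq_univ]

section Fiber

variable {n : ℕ} {κ : Type*} (α : κ → ℚ) (β : κ → RatAff n)

/-- The fiber over `y` of the polyhedron `{(t, y) | ∀ k, 0 ≤ α k * t + β k y}`. -/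
def fiber (y : Fin n → ℝ) : Set ℝ := {t | ∀ k, 0 ≤ (α k : ℝ) * t + (β k).eval y}

noncomputable def fiberInf (y : Fin n → ℝ) : EReal := sInf (((↑) : ℝ → EReal) '' fiber α β y)

theorem fiber_nonempty_iff [Fintype κ] (y : Fin n → ℝ) :
    (fiber α β y).Nonempty ↔ (∀ i, (α i : ℝ) = 0 → 0 ≤ (β i).eval y) ∧
      ∀ i j, 0 < (α i : ℝ) → (α j : ℝ) < 0 → 0 ≤ α i * (β j).eval y - α j * (β i).eval y :=
  exists_forall_nonneg_mul_add_iff _ _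

/-- The affine forms whose signs decide which constraint of `fiber α β y` is binding. -/
def fiberSignForms : κ ⊕ κ × κ → RatAff n :=
  Sum.elim β fun p => α p.1 • β p.2 - α p.2 • β p.1

theorem isRatAffineOrInfiniteOn_fiberInf_signCell [Fintype κ] (s : κ ⊕ κ × κ → Bool) :
    IsRatAffineOrInfiniteOn (fiberInf α β) (signCell (fiberSignForms α β) s) := by
  set P := signCell (fiberSignForms α β) s
  rcases P.eq_empty_or_nonempty with hP | ⟨y₀, hy₀⟩
  · exact Or.inr (Or.inl fun y hy => absurd (hP ▸ hy) (Set.notMem_empty y))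
  have hβ : ∀ y ∈ P, ∀ i, 0 ≤ (β i).eval y ↔ 0 ≤ (β i).eval y₀ := fun y hy i =>
    signCell.nonneg_iff_of_mem hy hy₀ (.inl i)
  have hγ : ∀ y ∈ P, ∀ i j, 0 ≤ α i * (β j).eval y - α j * (β i).eval y ↔
      0 ≤ α i * (β j).eval y₀ - α j * (β i).eval y₀ := fun y hy i j => by
    simpa [fiberSignForms] using signCell.nonneg_iff_of_mem hy hy₀ (.inr (i, j))
  have hfeas_iff : ∀ y ∈ P, (fiber α β y).Nonempty ↔ (fiber α β y₀).Nonempty := fun y hy => by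
    simp only [fiber_nonempty_iff, hβ y hy, hγ y hy]
  by_cases hne₀ : (fiber α β y₀).Nonempty
  · by_cases hpos : ∃ i, 0 < α i
    · obtain ⟨i₀, hi₀, hmax⟩ := exists_index_max_lower_bound (fun k => (α k : ℝ))
        (fun k => (β k).eval y₀) (hpos.imp fun i => Rat.cast_pos.2)
      obtain ⟨hzero, hpair⟩ := (fiber_nonempty_iff α β y₀).1 hne₀
      let f : RatAff n := (-(α i₀)⁻¹) • β i₀
      refine Or.inl ⟨f.1, f.2, fun y hy => ?_⟩
      have hleast : IsLeast (fiber α β y) (-(β i₀).eval y / α i₀) :=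
        isLeast_setOf_forall_nonneg_mul_add hi₀ (fun j hj => (hβ y hy j).2 (hzero j hj))
          fun j hj => (hγ y hy i₀ j).2 (hj.lt_or_gt.elim (hpair i₀ j hi₀) (hmax j))
      have hf : f.eval y = -(β i₀).eval y / α i₀ := by
        simp [f]; ring
      show fiberInf α β y = (f.eval y : EReal)
      rw [fiberInf, EReal.sInf_coe_image_of_isLeast hleast, hf]
    · have hlower : ∀ y, IsLowerSet (fiber α β y) := fun _ =>
        isLowerSet_setOf_forall_nonneg_mul_add fun i =>
          Rat.cast_nonpos.2 (not_lt.1 (not_exists.1 hpos i))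
      exact Or.inr (Or.inr fun y hy =>
        EReal.sInf_coe_image_eq_bot (hlower y) ((hfeas_iff y hy).2 hne₀))
  · refine Or.inr (Or.inl fun y hy => ?_)
    rw [fiberInf, Set.not_nonempty_iff_eq_empty.1 (mt (hfeas_iff y hy).1 hne₀), Set.image_empty,
      sInf_empty]

end Fiber

section LPEpigraph

variable {nx ny m : ℕ} (A : Matrix (Fin m) (Fin nx) ℚ) (B : Matrix (Fin m) (Fin ny) ℚ)
  (b : Fin m → ℚ) (c : Fin nx → ℚ)

/-- The constraints `t - ∑ j, c j * x j ≥ 0` and `A x + B y - b ≥ 0` of the epigraph of the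
LP, in the variables `x` and `z = (t, y)`. -/
def lpEpigraphCons : Option (Fin m) → LinCon nx (ny + 1)
  | none => (-c, (Fin.cons 1 0, 0))
  | some i => (A i, (Fin.cons 0 (B i), -b i))

@[simp]
theorem lpEpigraphCons_none_eval (x : Fin nx → ℝ) (t : ℝ) (y : Fin ny → ℝ) :
    (lpEpigraphCons A B b c none).eval x (Fin.cons t y) = t - ratDot c x := by
  simp [lpEpigraphCons, LinCon.eval, RatAff.eval, ratDot_cons]; ring

@[simp]
theorem lpEpigraphCons_some_eval (i : Fin m) (x : Fin nx → ℝ) (t : ℝ) (y : Fin ny → ℝ) :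
    (lpEpigraphCons A B b c (some i)).eval x (Fin.cons t y) =
      ratDot (A i) x + ratDot (B i) y - b i := by
  simp [lpEpigraphCons, LinCon.eval, RatAff.eval, ratDot_cons]; ring

theorem exists_fiber_eq_lpEpigraph :
    ∃ (κ : Type) (_ : Fintype κ) (α : κ → ℚ) (β : κ → RatAff ny), ∀ y, fiber α β y =
      {t | ∃ x, (fun i => (b i : ℝ)) ≤
          (A.map ((↑·) : ℚ → ℝ)).mulVec x + (B.map ((↑·) : ℚ → ℝ)).mulVec y ∧
        ∑ j, (c j : ℝ) * x j ≤ t} := by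
  obtain ⟨κ, _, d, hd⟩ := LinCon.exists_ratAff_forall_nonneg_iff nx (lpEpigraphCons A B b c)
  refine ⟨κ, inferInstance, fun k => (d k).1 0, fun k => (Fin.tail (d k).1, (d k).2), fun y => ?_⟩
  ext t
  have := hd (Fin.cons t y)
  simp only [RatAff.eval_cons] at this
  rw [fiber, Set.mem_ofPred_eq, ← this]
  refine exists_congr fun x => ?_
  simp only [Option.forall, lpEpigraphCons_none_eval, lpEpigraphCons_some_eval, Pi.le_def,
    Pi.add_apply, Matrix.mulVec_map_ratCast_apply, sub_nonneg, and_comm]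
  exact Iff.rfl

end LPEpigraph

/-- the value function v(y) = inf_x { cᵀx : A x + B y ≥ b } of a
rational LP with right-hand-side parameter y is piecewise linear: there is a
finite partition of ℝ^{ny} into rational generalized polyhedra on each of which
v is a rational affine-linear function of y, identically +∞, or identically −∞. -/
theorem stmt_16 {nx ny m : ℕ}
    (A : Matrix (Fin m) (Fin nx) ℚ) (B : Matrix (Fin m) (Fin ny) ℚ)
    (b : Fin m → ℚ) (c : Fin nx → ℚ)
    (v : (Fin ny → ℝ) → EReal)
    (hv : ∀ y, v y =
      ⨅ x : {x : Fin nx → ℝ // (fun i => (b i : ℝ)) ≤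
          (A.map ((↑·) : ℚ → ℝ)).mulVec x + (B.map ((↑·) : ℚ → ℝ)).mulVec y},
        ((∑ j, (c j : ℝ) * (x : Fin nx → ℝ) j : ℝ) : EReal)) :
    ∃ (k : ℕ) (P : Fin k → Set (Fin ny → ℝ)),
      (∀ l, IsRatGenPolyhedron (P l)) ∧
      Pairwise (Function.onFun Disjoint P) ∧
      (⋃ l, P l) = Set.univ ∧
      ∀ l, (∃ (c' : Fin ny → ℚ) (d : ℚ), ∀ y ∈ P l,
              v y = ((∑ j, (c' j : ℝ) * y j + (d : ℝ) : ℝ) : EReal)) ∨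
           (∀ y ∈ P l, v y = ⊤) ∨ (∀ y ∈ P l, v y = ⊥) := by
  obtain ⟨κ, _, α, β, hfiber⟩ := exists_fiber_eq_lpEpigraph A B b c
  obtain rfl : v = fiberInf α β := funext fun y => by
    rw [hv, fiberInf, hfiber]
    exact EReal.iInf_subtype_coe_eq_sInf_coe_image _ fun x : Fin nx → ℝ => ∑ j, (c j : ℝ) * x j
  exact exists_partition_of_isRatAffineOrInfiniteOn_signCell _ _
    (isRatAffineOrInfiniteOn_fiberInf_signCell α β)
end
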